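/- (Lemma 2 of the paper, converse direction.) Fix n ≥ 1, positive integers p_1,…,p_n with p = p_1 + ⋯ + p_n, reals ρ_1,…,ρ_n > 0, κ > 0, set α_i = κρ_i, and let V = diag(V_1,…,V_n) be block-diagonal symmetric positive definite with V_i of size p_i × p_i. Let E_i denote the p × p_i matrix whose i-th block is I_{p_i} and all other blocks are zero. Suppose Π is a real symmetric positive semidefinite p × p matrix such that V − V Π V is positive definite and, for every 1 ≤ i ≤ n, the block matrix [[I_{p_i}/α_i² + V_i⁻¹, E_iᵀ], [E_i, V − V Π V]] is positive semidefinite but not positive definite. Then κ²((V − V Π V)⁻¹ − V⁻¹) is positive semidefinite, and there exists a real p × p matrix D with DᵀD = κ²((V − V Π V)⁻¹ − V⁻¹); moreover, every such D has column blocks D_i ∈ ℝ^{p×p_i} satisfying ‖D_i‖₂ = 1/ρ_i for all i (so max_i ρ_i‖D_i‖₂ = 1), and satisfies Π = V⁻¹ − V⁻¹(V⁻¹ + DᵀD/κ²)⁻¹V⁻¹. -/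

import Mathlib

/-!
Write `W = V - VΠV`. Since `V - W = VΠV ⪰ 0`, antitonicity of the inverse on positive definite
matrices gives `W⁻¹ ⪰ V⁻¹`, so `κ²(W⁻¹ - V⁻¹)` is a Gram matrix `DᵀD`. The `i`-th diagonal block
of `DᵀD` is `κ²(E_iᵀ W⁻¹ E_i - V_i⁻¹) = ρ_i⁻² I - κ² S_i`, where `S_i` is the Schur complement of
`W` in the `i`-th block matrix. That block matrix being positive semidefinite but singular says
exactly that `S_i ⪰ 0` has a nonzero kernel vector, hence `‖D_i‖₂ = ρ_i⁻¹`. Finally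
`V⁻¹ - V⁻¹ W V⁻¹ = Π` is the claimed formula for `Π`.
-/

open Matrix

/-- The induced 2-norm (largest singular value) of a real matrix. -/
noncomputable def sNorm {m n : Type*} [Fintype m] [Fintype n] [DecidableEq n]
    (M : Matrix m n ℝ) : ℝ :=
  ‖LinearMap.toContinuousLinearMap (Matrix.toEuclideanLin M)‖

/-- The `i`-th column block of a matrix with columns indexed by `(i : Fin n) × Fin (p i)`. -/
def blk {n : ℕ} {p : Fin n → ℕ} {q : Type*}
    (D : Matrix q ((i : Fin n) × Fin (p i)) ℝ) (i : Fin n) :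
    Matrix q (Fin (p i)) ℝ :=
  Matrix.of fun r j => D r ⟨i, j⟩

/-- The tall matrix `E_i` whose `i`-th block is `I_{p_i}` and other blocks are zero. -/
def Emat {n : ℕ} (p : Fin n → ℕ) (i : Fin n) :
    Matrix ((j : Fin n) × Fin (p j)) (Fin (p i)) ℝ :=
  Matrix.of fun x l => if x = ⟨i, l⟩ then 1 else 0

open scoped ComplexOrder

namespace Matrix

variable {𝕜 m k : Type*} [RCLike 𝕜] [Fintype m] [Fintype k] [DecidableEq m] [DecidableEq k]

/-- `A - B` and `B⁻¹ - A⁻¹` are the two Schur complements of `[[A, 1], [1, B⁻¹]]`. -/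
theorem PosDef.posSemidef_inv_sub_inv {A B : Matrix k k 𝕜} (hA : A.PosDef) (hB : B.PosDef)
    (hAB : (A - B).PosSemidef) : (B⁻¹ - A⁻¹).PosSemidef := by
  have := hA.isUnit.invertible
  have := hB.isUnit.invertible
  have := hB.inv.isUnit.invertible
  have h : (fromBlocks A 1 1 B⁻¹).PosSemidef := by
    simpa using (PosDef.fromBlocks₂₂ A 1 hB.inv).mpr (by simpa [inv_inv_of_invertible] using hAB)
  simpa using (PosDef.fromBlocks₁₁ 1 B⁻¹ hA).mp (by simpa using h)

theorem PosDef.fromBlocks₂₂_posDef_iff (A : Matrix m m 𝕜) (B : Matrix m k 𝕜) {D : Matrix k k 𝕜}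
    (hD : D.PosDef) : (fromBlocks A B Bᴴ D).PosDef ↔ (A - B * D⁻¹ * Bᴴ).PosDef := by
  have := hD.isUnit.invertible
  have hdet : (fromBlocks A B Bᴴ D).det = D.det * (A - B * D⁻¹ * Bᴴ).det := by
    rw [det_fromBlocks₂₂, invOf_eq_nonsing_inv]
  refine ⟨fun h => ?_, fun h => ?_⟩
  · rw [((PosDef.fromBlocks₂₂ A B hD).mp h.posSemidef).posDef_iff_det_ne_zero]
    exact right_ne_zero_of_mul (hdet ▸ h.det_pos.ne')
  · rw [((PosDef.fromBlocks₂₂ A B hD).mpr h.posSemidef).posDef_iff_det_ne_zero, hdet]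
    exact mul_ne_zero hD.det_pos.ne' h.det_pos.ne'

theorem PosSemidef.exists_mulVec_eq_zero_of_not_posDef {A : Matrix k k 𝕜} (hA : A.PosSemidef)
    (h : ¬ A.PosDef) : ∃ x ≠ 0, A *ᵥ x = 0 :=
  exists_mulVec_eq_zero_iff.mpr (by simpa [hA.posDef_iff_det_ne_zero] using h)

open scoped MatrixOrder in
theorem PosSemidef.exists_conjTranspose_mul_self_eq {A : Matrix k k 𝕜} (hA : A.PosSemidef) :
    ∃ B : Matrix k k 𝕜, Bᴴ * B = A := by
  obtain ⟨B, hB⟩ := CStarAlgebra.nonneg_iff_eq_star_mul_self.mp hA.nonneg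
  exact ⟨B, hB.symm⟩

theorem inv_blockDiagonal' {ι : Type*} [Fintype ι] [DecidableEq ι] {n : ι → Type*}
    [∀ i, Fintype (n i)] [∀ i, DecidableEq (n i)] {M : ∀ i, Matrix (n i) (n i) 𝕜}
    (hM : ∀ i, IsUnit (M i).det) : (blockDiagonal' M)⁻¹ = blockDiagonal' fun i => (M i)⁻¹ := by
  refine inv_eq_right_inv ?_
  rw [← blockDiagonal'_mul, ← blockDiagonal'_one]
  exact congrArg _ (funext fun i => mul_nonsing_inv _ (hM i))

end Matrix

theorem eq_inv_sub_inv_mul_mul_inv {R k : Type*} [CommRing R] [Fintype k] [DecidableEq k]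
    {V : Matrix k k R} (hV : IsUnit V.det) (P : Matrix k k R) :
    P = V⁻¹ - V⁻¹ * (V - V * P * V) * V⁻¹ := by
  simp only [Matrix.mul_sub, Matrix.sub_mul, ← Matrix.mul_assoc, nonsing_inv_mul _ hV,
    Matrix.one_mul]
  rw [Matrix.mul_assoc P, mul_nonsing_inv _ hV, Matrix.mul_one, sub_sub_cancel]

theorem sq_norm_toEuclideanLin {q k : Type*} [Fintype q] [Fintype k] [DecidableEq k]
    (B : Matrix q k ℝ) (x : EuclideanSpace ℝ k) :
    ‖toEuclideanLin B x‖ ^ 2 = x.ofLp ⬝ᵥ (Bᵀ * B) *ᵥ x.ofLp := by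
  rw [← real_inner_self_eq_norm_sq, EuclideanSpace.inner_eq_star_dotProduct]
  simp [← mulVec_mulVec, dotProduct_mulVec, vecMul_transpose, dotProduct_comm]

theorem sNorm_eq_of_transpose_mul_self_eq_sub {q k : Type*} [Fintype q] [Fintype k]
    [DecidableEq k] {B : Matrix q k ℝ} {c : ℝ} (hc : 0 ≤ c) {T : Matrix k k ℝ}
    (hT : T.PosSemidef) (hB : Bᵀ * B = c ^ 2 • 1 - T) {x : k → ℝ} (hx : x ≠ 0)
    (hTx : T *ᵥ x = 0) : sNorm B = c := by
  set L := LinearMap.toContinuousLinearMap (toEuclideanLin B)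
  have hL (v : EuclideanSpace ℝ k) : ‖L v‖ ^ 2 = (c * ‖v‖) ^ 2 - v.ofLp ⬝ᵥ T *ᵥ v.ofLp := by
    rw [LinearMap.coe_toContinuousLinearMap', sq_norm_toEuclideanLin, hB, mul_pow,
      EuclideanSpace.real_norm_sq_eq, sub_mulVec, smul_mulVec, one_mulVec, dotProduct_sub,
      dotProduct_smul, smul_eq_mul]
    simp [dotProduct, sq, Finset.mul_sum]
  have hle : ‖L‖ ≤ c := by
    refine L.opNorm_le_bound hc fun v => ?_
    have hTv := hT.dotProduct_mulVec_nonneg v.ofLp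
    rw [star_trivial] at hTv
    exact (pow_le_pow_iff_left₀ (norm_nonneg _) (by positivity) two_ne_zero).mp (by linarith [hL v])
  set x' : EuclideanSpace ℝ k := WithLp.toLp 2 x
  have hx' : 0 < ‖x'‖ := norm_pos_iff.mpr (by simpa [x'] using hx)
  have heq : ‖L x'‖ = c * ‖x'‖ :=
    (pow_left_inj₀ (norm_nonneg _) (by positivity) two_ne_zero).mp (by simpa [x', hTx] using hL x')
  exact le_antisymm hle (le_of_mul_le_mul_right (heq ▸ L.le_opNorm x') hx')

section Blocks

variable {n : ℕ} {p : Fin n → ℕ}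

theorem transpose_blk_mul_blk {q : Type*} [Fintype q] (D : Matrix q ((i : Fin n) × Fin (p i)) ℝ)
    (i : Fin n) : (blk D i)ᵀ * blk D i = blockDiag' (Dᵀ * D) i := by
  ext a b
  simp [blk, mul_apply, blockDiag'_apply]

theorem transpose_Emat_mul_mul_Emat
    (M : Matrix ((i : Fin n) × Fin (p i)) ((i : Fin n) × Fin (p i)) ℝ) (i : Fin n) :
    (Emat p i)ᵀ * M * Emat p i = blockDiag' M i := by
  ext a b
  simp [Emat, mul_apply, blockDiag'_apply]

theorem sNorm_blk_eq_of_not_posDef {Vb : ∀ i, Matrix (Fin (p i)) (Fin (p i)) ℝ}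
    (hVb : ∀ i, IsUnit (Vb i).det)
    {W : Matrix ((i : Fin n) × Fin (p i)) ((i : Fin n) × Fin (p i)) ℝ} (hW : W.PosDef)
    {κ ρ α : ℝ} (hκ : κ ≠ 0) (hρ : 0 < ρ) (hα : α = κ * ρ) {i : Fin n}
    (hpsd : (fromBlocks ((α ^ 2)⁻¹ • 1 + (Vb i)⁻¹) (Emat p i)ᵀ (Emat p i) W).PosSemidef)
    (hnpd : ¬ (fromBlocks ((α ^ 2)⁻¹ • 1 + (Vb i)⁻¹) (Emat p i)ᵀ (Emat p i) W).PosDef)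
    {D : Matrix ((i : Fin n) × Fin (p i)) ((i : Fin n) × Fin (p i)) ℝ}
    (hD : Dᵀ * D = κ ^ 2 • (W⁻¹ - (blockDiagonal' Vb)⁻¹)) :
    sNorm (blk D i) = 1 / ρ := by
  have := hW.isUnit.invertible
  set S := (α ^ 2)⁻¹ • 1 + (Vb i)⁻¹ - (Emat p i)ᵀ * W⁻¹ * Emat p i
  have hE : ((Emat p i)ᵀ)ᴴ = Emat p i := by
    rw [conjTranspose_eq_transpose_of_trivial, transpose_transpose]
  have hS : S.PosSemidef := by
    simpa only [hE] using (PosDef.fromBlocks₂₂ _ (Emat p i)ᵀ hW).mp (by rwa [hE])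
  have hnS : ¬ S.PosDef := by
    simpa only [hE] using (PosDef.fromBlocks₂₂_posDef_iff _ (Emat p i)ᵀ hW).not.mp (by rwa [hE])
  obtain ⟨x, hx, hSx⟩ := hS.exists_mulVec_eq_zero_of_not_posDef hnS
  refine sNorm_eq_of_transpose_mul_self_eq_sub (by positivity) (hS.smul (sq_nonneg κ)) ?_ hx
    (by rw [smul_mulVec, hSx, smul_zero])
  have hscale : (1 / ρ) ^ 2 = κ ^ 2 * (α ^ 2)⁻¹ := by
    rw [hα]
    field_simp
  rw [transpose_blk_mul_blk, hD, blockDiag'_smul, blockDiag'_sub, inv_blockDiagonal' hVb,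
    blockDiag'_blockDiagonal', Pi.smul_apply, Pi.sub_apply, ← transpose_Emat_mul_mul_Emat, hscale]
  simp only [S, smul_sub, smul_add, smul_smul]
  abel

end Blocks

theorem stmt_9_general {n : ℕ} (hn : 1 ≤ n) (p : Fin n → ℕ)
    (ρ : Fin n → ℝ) (hρ : ∀ i, 0 < ρ i) (κ : ℝ) (hκ : 0 < κ)
    (α : Fin n → ℝ) (hα : ∀ i, α i = κ * ρ i)
    (Vb : ∀ i : Fin n, Matrix (Fin (p i)) (Fin (p i)) ℝ)
    (hVb : ∀ i, (Vb i).PosDef)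
    (V : Matrix ((i : Fin n) × Fin (p i)) ((i : Fin n) × Fin (p i)) ℝ)
    (hV : V = Matrix.blockDiagonal' Vb)
    (Pi : Matrix ((i : Fin n) × Fin (p i)) ((i : Fin n) × Fin (p i)) ℝ)
    (hPi : Pi.PosSemidef)
    (hPD : (V - V * Pi * V).PosDef)
    (hLMI : ∀ i : Fin n,
      (Matrix.fromBlocks
          (((α i) ^ 2)⁻¹ • (1 : Matrix (Fin (p i)) (Fin (p i)) ℝ) + (Vb i)⁻¹)
          (Emat p i)ᵀ (Emat p i) (V - V * Pi * V)).PosSemidef ∧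
      ¬ (Matrix.fromBlocks
          (((α i) ^ 2)⁻¹ • (1 : Matrix (Fin (p i)) (Fin (p i)) ℝ) + (Vb i)⁻¹)
          (Emat p i)ᵀ (Emat p i) (V - V * Pi * V)).PosDef) :
    (κ ^ 2 • ((V - V * Pi * V)⁻¹ - V⁻¹)).PosSemidef ∧
    (∃ D : Matrix ((i : Fin n) × Fin (p i)) ((i : Fin n) × Fin (p i)) ℝ,
        Dᵀ * D = κ ^ 2 • ((V - V * Pi * V)⁻¹ - V⁻¹)) ∧
    ∀ D : Matrix ((i : Fin n) × Fin (p i)) ((i : Fin n) × Fin (p i)) ℝ,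
      Dᵀ * D = κ ^ 2 • ((V - V * Pi * V)⁻¹ - V⁻¹) →
        (∀ i : Fin n, sNorm (blk D i) = 1 / ρ i) ∧
        (⨆ i : Fin n, ρ i * sNorm (blk D i)) = 1 ∧
        Pi = V⁻¹ - V⁻¹ * (V⁻¹ + (κ ^ 2)⁻¹ • (Dᵀ * D))⁻¹ * V⁻¹ := by
  have : Nonempty (Fin n) := ⟨⟨0, hn⟩⟩
  have hVPiV : (V * Pi * V).PosSemidef := by
    have hVH : V.IsHermitian := hV ▸ isHermitian_blockDiagonal'_iff.mpr fun i => (hVb i).1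
    simpa only [hVH.eq] using hPi.mul_mul_conjTranspose_same V
  have hVpd : V.PosDef := by simpa using hPD.add_posSemidef hVPiV
  have hgap : (κ ^ 2 • ((V - V * Pi * V)⁻¹ - V⁻¹)).PosSemidef :=
    (hVpd.posSemidef_inv_sub_inv hPD (by simpa using hVPiV)).smul (sq_nonneg κ)
  refine ⟨hgap, ?_, fun D hD => ?_⟩
  · obtain ⟨D, hD⟩ := hgap.exists_conjTranspose_mul_self_eq
    exact ⟨D, by rwa [← conjTranspose_eq_transpose_of_trivial]⟩
  have hnorm (i : Fin n) : sNorm (blk D i) = 1 / ρ i :=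
    sNorm_blk_eq_of_not_posDef (fun j => (isUnit_iff_isUnit_det _).mp (hVb j).isUnit) hPD
      hκ.ne' (hρ i) (hα i) (hLMI i).1 (hLMI i).2 (hV ▸ hD)
  refine ⟨hnorm, by simp [hnorm, (hρ _).ne'], ?_⟩
  rw [hD, smul_smul, inv_mul_cancel₀ (by positivity), one_smul, add_sub_cancel,
    nonsing_inv_nonsing_inv _ ((isUnit_iff_isUnit_det _).mp hPD.isUnit)]
  exact eq_inv_sub_inv_mul_mul_inv ((isUnit_iff_isUnit_det _).mp hVpd.isUnit) Pi

/-- **Lemma 2 of the paper, converse direction.** If `Π ⪰ 0` is such that `V − VΠV ≻ 0`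
and for every `i` the block matrix `[[I/α_i² + V_i⁻¹, E_iᵀ],[E_i, V − VΠV]]` is PSD but
not positive definite, then `κ²((V − VΠV)⁻¹ − V⁻¹) ⪰ 0`, some `D` factors it as `DᵀD`,
and every such `D` has `‖D_i‖₂ = 1/ρ_i` for all `i` and reproduces `Π`. -/
theorem stmt_9 {n : ℕ} (hn : 1 ≤ n) (p : Fin n → ℕ) (hp : ∀ i, 0 < p i)
    (ρ : Fin n → ℝ) (hρ : ∀ i, 0 < ρ i) (κ : ℝ) (hκ : 0 < κ)
    (α : Fin n → ℝ) (hα : ∀ i, α i = κ * ρ i)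
    (Vb : ∀ i : Fin n, Matrix (Fin (p i)) (Fin (p i)) ℝ)
    (hVb : ∀ i, (Vb i).PosDef)
    (V : Matrix ((i : Fin n) × Fin (p i)) ((i : Fin n) × Fin (p i)) ℝ)
    (hV : V = Matrix.blockDiagonal' Vb)
    (Pi : Matrix ((i : Fin n) × Fin (p i)) ((i : Fin n) × Fin (p i)) ℝ)
    (hPi : Pi.PosSemidef)
    (hPD : (V - V * Pi * V).PosDef)
    (hLMI : ∀ i : Fin n,
      (Matrix.fromBlocks
          (((α i) ^ 2)⁻¹ • (1 : Matrix (Fin (p i)) (Fin (p i)) ℝ) + (Vb i)⁻¹)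
          (Emat p i)ᵀ (Emat p i) (V - V * Pi * V)).PosSemidef ∧
      ¬ (Matrix.fromBlocks
          (((α i) ^ 2)⁻¹ • (1 : Matrix (Fin (p i)) (Fin (p i)) ℝ) + (Vb i)⁻¹)
          (Emat p i)ᵀ (Emat p i) (V - V * Pi * V)).PosDef) :
    (κ ^ 2 • ((V - V * Pi * V)⁻¹ - V⁻¹)).PosSemidef ∧
    (∃ D : Matrix ((i : Fin n) × Fin (p i)) ((i : Fin n) × Fin (p i)) ℝ,
        Dᵀ * D = κ ^ 2 • ((V - V * Pi * V)⁻¹ - V⁻¹)) ∧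
    ∀ D : Matrix ((i : Fin n) × Fin (p i)) ((i : Fin n) × Fin (p i)) ℝ,
      Dᵀ * D = κ ^ 2 • ((V - V * Pi * V)⁻¹ - V⁻¹) →
        (∀ i : Fin n, sNorm (blk D i) = 1 / ρ i) ∧
        (⨆ i : Fin n, ρ i * sNorm (blk D i)) = 1 ∧
        Pi = V⁻¹ - V⁻¹ * (V⁻¹ + (κ ^ 2)⁻¹ • (Dᵀ * D))⁻¹ * V⁻¹ :=
  stmt_9_general hn p ρ hρ κ hκ α hα Vb hVb V hV Pi hPi hPD hLMI
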